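/- Let p ≥ 1 and, for each i ∈ Fin p, let Qᵢ (nᵢ×k), Uᵢ (nᵢ×s), Rᵢ (k×k), Xᵢ (nᵢ×s), Pᵢ (k×s), Nᵢ (s×s), P̃ᵢ (k×s), Ñᵢ (s×s) be real matrices, and let P (k×s) and N (s×s) be real matrices, satisfying: (i) Qᵢᵀ*Qᵢ = I_k, Uᵢᵀ*Uᵢ = I_s, Qᵢᵀ*Uᵢ = 0 for each i; (ii) ∑_i Rᵢᵀ*Rᵢ = I_k; (iii) Xᵢ = Qᵢ*Pᵢ + Uᵢ*Nᵢ for each i (local solves); (iv) Pᵢ = Rᵢ*P + P̃ᵢ*N and Nᵢ = Ñᵢ*N for each i (reduction step); (v) ∑_i Rᵢᵀ*P̃ᵢ = 0 and ∑_i (P̃ᵢᵀ*P̃ᵢ + Ñᵢᵀ*Ñᵢ) = I_s. Let Q be the matrix with row blocks Qᵢ*Rᵢ, X the matrix with row blocks Xᵢ, and U the matrix with row blocks Qᵢ*P̃ᵢ + Uᵢ*Ñᵢ. Then X = Q*P + U*N, Qᵀ*U = 0, and Uᵀ*U = I_s. -/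

import Mathlib

open Matrix

/-! Each `[Qᵢ Uᵢ]` has orthonormal columns, so a Gram product of two matrices of the form
`Qᵢ A + Uᵢ B` equals the Gram product of their coefficient stacks `[A; B]`. A Gram product of
row-stacked matrices is the sum of the blockwise Gram products, so `QᵀU` and `UᵀU` become exactly
the sums that the reduction step makes `0` and `I`. The identity `X = QP + UN` holds block by block
after substituting the local solve and the reduction step. -/

namespace Matrix

variable {ι R : Type*} {κ : ι → Type*} {m n o : Type*}

def stackRows (A : ∀ i, Matrix (κ i) n R) : Matrix ((i : ι) × κ i) n R :=
  of fun x c => A x.1 x.2 c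

theorem stackRows_add [Add R] (A B : ∀ i, Matrix (κ i) n R) :
    stackRows (fun i => A i + B i) = stackRows A + stackRows B :=
  rfl

theorem stackRows_mul [Fintype n] [NonUnitalNonAssocSemiring R]
    (A : ∀ i, Matrix (κ i) n R) (M : Matrix n o R) :
    stackRows A * M = stackRows fun i => A i * M :=
  rfl

theorem transpose_stackRows_mul_stackRows [Fintype ι] [∀ i, Fintype (κ i)]
    [NonUnitalNonAssocSemiring R] (A : ∀ i, Matrix (κ i) m R) (B : ∀ i, Matrix (κ i) n R) :
    (stackRows A)ᵀ * stackRows B = ∑ i, (A i)ᵀ * B i := by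
  ext r c
  simp only [mul_apply, transpose_apply, sum_apply, stackRows, of_apply]
  exact Fintype.sum_sigma _

variable {r a b : Type*} [Fintype r] [Fintype m] [DecidableEq m] [CommRing R]

theorem transpose_mul_of_orthonormal [Fintype n] [DecidableEq n] {Q : Matrix r m R}
    {U : Matrix r n R} (hQ : Qᵀ * Q = 1) (hU : Uᵀ * U = 1) (hQU : Qᵀ * U = 0)
    (A : Matrix m a R) (B : Matrix n a R) (C : Matrix m b R) (D : Matrix n b R) :
    (Q * A + U * B)ᵀ * (Q * C + U * D) = Aᵀ * C + Bᵀ * D := by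
  have hUQ : Uᵀ * Q = 0 := by simpa using congrArg transpose hQU
  simp only [transpose_add, transpose_mul, Matrix.add_mul, Matrix.mul_add, Matrix.mul_assoc]
  simp only [← Matrix.mul_assoc Qᵀ, ← Matrix.mul_assoc Uᵀ, hQ, hU, hQU, hUQ]
  simp

theorem transpose_mul_of_orthonormal_left [Fintype n] {Q : Matrix r m R}
    {U : Matrix r n R} (hQ : Qᵀ * Q = 1) (hQU : Qᵀ * U = 0)
    (A : Matrix m a R) (C : Matrix m b R) (D : Matrix n b R) :
    (Q * A)ᵀ * (Q * C + U * D) = Aᵀ * C := by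
  simp only [transpose_mul, Matrix.mul_add, Matrix.mul_assoc]
  simp only [← Matrix.mul_assoc Qᵀ, hQ, hQU]
  simp

end Matrix

theorem tree_tspqr_correct_general (p k s : ℕ) (nrows : Fin p → ℕ)
    (Qb : ∀ i : Fin p, Matrix (Fin (nrows i)) (Fin k) ℝ)
    (Ub : ∀ i : Fin p, Matrix (Fin (nrows i)) (Fin s) ℝ)
    (Rb : Fin p → Matrix (Fin k) (Fin k) ℝ)
    (Xb : ∀ i : Fin p, Matrix (Fin (nrows i)) (Fin s) ℝ)
    (Pb : Fin p → Matrix (Fin k) (Fin s) ℝ)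
    (Nb : Fin p → Matrix (Fin s) (Fin s) ℝ)
    (Pt : Fin p → Matrix (Fin k) (Fin s) ℝ)
    (Nt : Fin p → Matrix (Fin s) (Fin s) ℝ)
    (P : Matrix (Fin k) (Fin s) ℝ) (N : Matrix (Fin s) (Fin s) ℝ)
    -- (i) local orthonormality
    (hQb : ∀ i, (Qb i)ᵀ * Qb i = 1)
    (hUb : ∀ i, (Ub i)ᵀ * Ub i = 1)
    (hQUb : ∀ i, (Qb i)ᵀ * Ub i = 0)
    -- (iii) local solves
    (hloc : ∀ i, Xb i = Qb i * Pb i + Ub i * Nb i)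
    -- (iv) reduction step
    (hPred : ∀ i, Pb i = Rb i * P + Pt i * N)
    (hNred : ∀ i, Nb i = Nt i * N)
    -- (v) orthonormality of the reduced factor
    (hred1 : ∑ i : Fin p, (Rb i)ᵀ * Pt i = 0)
    (hred2 : ∑ i : Fin p, ((Pt i)ᵀ * Pt i + (Nt i)ᵀ * Nt i) = 1)
    -- the stacked matrices
    (Q : Matrix ((i : Fin p) × Fin (nrows i)) (Fin k) ℝ)
    (X U : Matrix ((i : Fin p) × Fin (nrows i)) (Fin s) ℝ)
    (hQ : ∀ (x : (i : Fin p) × Fin (nrows i)) (c : Fin k),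
      Q x c = (Qb x.1 * Rb x.1) x.2 c)
    (hX : ∀ (x : (i : Fin p) × Fin (nrows i)) (c : Fin s),
      X x c = Xb x.1 x.2 c)
    (hU : ∀ (x : (i : Fin p) × Fin (nrows i)) (c : Fin s),
      U x c = (Qb x.1 * Pt x.1 + Ub x.1 * Nt x.1) x.2 c) :
    X = Q * P + U * N ∧ Qᵀ * U = 0 ∧ Uᵀ * U = 1 := by
  obtain rfl : Q = stackRows fun i => Qb i * Rb i := Matrix.ext hQ
  obtain rfl : X = stackRows Xb := Matrix.ext hX
  obtain rfl : U = stackRows fun i => Qb i * Pt i + Ub i * Nt i := Matrix.ext hU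
  refine ⟨?_, ?_, ?_⟩
  · rw [stackRows_mul, stackRows_mul, ← stackRows_add]
    congr 1
    funext i
    rw [hloc, hPred, hNred]
    simp only [Matrix.mul_add, Matrix.add_mul, Matrix.mul_assoc]
    abel
  · simp_rw [transpose_stackRows_mul_stackRows,
      transpose_mul_of_orthonormal_left (hQb _) (hQUb _)]
    exact hred1
  · simp_rw [transpose_stackRows_mul_stackRows,
      transpose_mul_of_orthonormal (hQb _) (hUb _) (hQUb _)]
    exact hred2

/-- main correctness theorem (in exact arithmetic) of the
TreeTSPQR algorithm: local project-and-normalize solves on each row block,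
combined with a reduction step on the stacked coefficient matrices, solve the
global project-and-normalize problem `X = Q*P + U*N`, `QᵀU = 0`, `UᵀU = I`. -/
theorem tree_tspqr_correct (p k s : ℕ) (hp : 1 ≤ p) (nrows : Fin p → ℕ)
    (Qb : ∀ i : Fin p, Matrix (Fin (nrows i)) (Fin k) ℝ)
    (Ub : ∀ i : Fin p, Matrix (Fin (nrows i)) (Fin s) ℝ)
    (Rb : Fin p → Matrix (Fin k) (Fin k) ℝ)
    (Xb : ∀ i : Fin p, Matrix (Fin (nrows i)) (Fin s) ℝ)
    (Pb : Fin p → Matrix (Fin k) (Fin s) ℝ)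
    (Nb : Fin p → Matrix (Fin s) (Fin s) ℝ)
    (Pt : Fin p → Matrix (Fin k) (Fin s) ℝ)
    (Nt : Fin p → Matrix (Fin s) (Fin s) ℝ)
    (P : Matrix (Fin k) (Fin s) ℝ) (N : Matrix (Fin s) (Fin s) ℝ)
    -- (i) local orthonormality
    (hQb : ∀ i, (Qb i)ᵀ * Qb i = 1)
    (hUb : ∀ i, (Ub i)ᵀ * Ub i = 1)
    (hQUb : ∀ i, (Qb i)ᵀ * Ub i = 0)
    -- (ii) orthonormality of the stacked R-factors
    (hRb : ∑ i : Fin p, (Rb i)ᵀ * Rb i = 1)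
    -- (iii) local solves
    (hloc : ∀ i, Xb i = Qb i * Pb i + Ub i * Nb i)
    -- (iv) reduction step
    (hPred : ∀ i, Pb i = Rb i * P + Pt i * N)
    (hNred : ∀ i, Nb i = Nt i * N)
    -- (v) orthonormality of the reduced factor
    (hred1 : ∑ i : Fin p, (Rb i)ᵀ * Pt i = 0)
    (hred2 : ∑ i : Fin p, ((Pt i)ᵀ * Pt i + (Nt i)ᵀ * Nt i) = 1)
    -- the stacked matrices
    (Q : Matrix ((i : Fin p) × Fin (nrows i)) (Fin k) ℝ)
    (X U : Matrix ((i : Fin p) × Fin (nrows i)) (Fin s) ℝ)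
    (hQ : ∀ (x : (i : Fin p) × Fin (nrows i)) (c : Fin k),
      Q x c = (Qb x.1 * Rb x.1) x.2 c)
    (hX : ∀ (x : (i : Fin p) × Fin (nrows i)) (c : Fin s),
      X x c = Xb x.1 x.2 c)
    (hU : ∀ (x : (i : Fin p) × Fin (nrows i)) (c : Fin s),
      U x c = (Qb x.1 * Pt x.1 + Ub x.1 * Nt x.1) x.2 c) :
    X = Q * P + U * N ∧ Qᵀ * U = 0 ∧ Uᵀ * U = 1 :=
  tree_tspqr_correct_general p k s nrows Qb Ub Rb Xb Pb Nb Pt Nt P N hQb hUb hQUb hloc hPred hNred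
    hred1 hred2 Q X U hQ hX hU
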